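/- Let G be a connected simple graph, let v be an internal vertex of G (v is not an end vertex and no end vertex of G is adjacent to v), and let H be a nonempty graph disjoint from G. Let F be the graph on V(G) ∪ V(H) whose edges are the edges of G, the edges of H, and an edge joining v to every vertex of H. If there exists a commutative semigroup S with zero such that Γ(S) is isomorphic to F, then there exists a commutative semigroup S′ with zero such that Γ(S′) is isomorphic to G. -/

import Mathlib

universe u v w
/-- A commutative semigroup with a zero element `0` satisfying `0 * a = 0`. -/
class CommSemigroupWithZero (S : Type u) extends CommSemigroup S, Zero S where
  zero_mul' : ∀ a : S, 0 * a = 0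

/-- The zero-divisor graph of `S`, as a simple graph on all of `S`:
distinct nonzero `x, y` are adjacent iff `x * y = 0`.  (The element `0` and the
non-zero-divisors are isolated vertices, so adjacency, end vertices and cycles
are exactly those of `Γ(S)`.) -/
def zdGraph (S : Type u) [CommSemigroupWithZero S] : SimpleGraph S where
  Adj x y := x ≠ y ∧ x * y = 0 ∧ x ≠ 0 ∧ y ≠ 0
  symm := by
    constructor
    rintro x y ⟨h1, h2, h3, h4⟩
    exact ⟨h1.symm, by rwa [mul_comm], h4, h3⟩
  loopless := ⟨fun x h => h.1 rfl⟩

/-- `x` is a vertex of `Γ(S)`: a nonzero zero-divisor. -/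
def IsVertex (S : Type u) [CommSemigroupWithZero S] (x : S) : Prop :=
  x ≠ 0 ∧ ∃ y : S, y ≠ 0 ∧ x * y = 0

/-- `x` is an end vertex of `Γ(S)`: it has exactly one neighbour. -/
def IsEndVertex (S : Type u) [CommSemigroupWithZero S] (x : S) : Prop :=
  ∃! y : S, (zdGraph S).Adj x y
/-- The zero-divisor graph of `S` on its vertex set (the nonzero zero-divisors). -/
def zdvGraph (S : Type u) [CommSemigroupWithZero S] :
    SimpleGraph {x : S // x ≠ 0 ∧ ∃ y : S, y ≠ 0 ∧ x * y = 0} where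
  Adj a b := a ≠ b ∧ (a : S) * (b : S) = 0
  symm := by
    constructor
    rintro a b ⟨h1, h2⟩
    exact ⟨h1.symm, by rwa [mul_comm]⟩
  loopless := ⟨fun a h => h.1 rfl⟩

/-- `G` is (isomorphic to) the zero-divisor graph of some commutative semigroup with zero. -/
def IsZDGraphOf {α : Type v} (G : SimpleGraph α) : Prop :=
  ∃ (S : Type u) (inst : CommSemigroupWithZero S), Nonempty ((@zdvGraph S inst) ≃g G)

/-- `v` is an end vertex of the abstract graph `G`: it has exactly one neighbour. -/
def IsEndG {α : Type v} (G : SimpleGraph α) (v : α) : Prop := ∃! u, G.Adj v u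

/-- The graph obtained from `G` by attaching the (disjoint) graph `H` to the vertex `v`:
keep all edges of `G` and of `H` and join `v` to every vertex of `H`. -/
def attachGraph {α : Type v} {β : Type w} (G : SimpleGraph α) (H : SimpleGraph β) (v : α) :
    SimpleGraph (α ⊕ β) where
  Adj x y :=
    match x, y with
    | Sum.inl a, Sum.inl b => G.Adj a b
    | Sum.inl a, Sum.inr _ => a = v
    | Sum.inr _, Sum.inl a => a = v
    | Sum.inr a, Sum.inr b => H.Adj a b
  symm := by
    constructor
    rintro (a | a) (b | b) h
    · exact G.adj_symm h
    · exact h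
    · exact h
    · exact H.adj_symm h
  loopless := by
    constructor
    rintro (a | a) h
    · exact G.irrefl h
    · exact H.irrefl h

/-! Write `σ a ∈ S` for the element corresponding to the vertex `a` of `G`. Since `x * y = 0`
implies `x * (y * z) = 0`, a nonzero product `σ a * σ b` is a vertex annihilated by every
`G`-neighbour of `a`; if it were a vertex of `H`, all those neighbours would be `v`, making `a`
an end vertex attached to `v`. Hence `{0} ∪ σ(α)` is a subsemigroup, and its zero-divisor graph
is `G`. A one-vertex `G` is the zero-divisor graph of the null semigroup `{0, x}`. -/

namespace CommSemigroupWithZero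

variable {S : Type u} [CommSemigroupWithZero S]

theorem mul_zero (a : S) : a * 0 = 0 := by
  rw [mul_comm]; exact zero_mul' a

abbrev subtype (P : S → Prop) (h0 : P 0) (hmul : ∀ x y : S, P x → P y → P (x * y)) :
    CommSemigroupWithZero {s : S // P s} where
  mul x y := ⟨x.1 * y.1, hmul _ _ x.2 y.2⟩
  mul_assoc x y z := Subtype.ext (mul_assoc x.1 y.1 z.1)
  mul_comm x y := Subtype.ext (mul_comm x.1 y.1)
  zero := ⟨0, h0⟩
  zero_mul' a := Subtype.ext (zero_mul' a.1)

abbrev nullOption : CommSemigroupWithZero (Option PUnit.{u + 1}) where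
  mul _ _ := none
  mul_assoc _ _ _ := rfl
  mul_comm _ _ := rfl
  zero := none
  zero_mul' _ := rfl

end CommSemigroupWithZero

theorem IsVertex.mul_left {S : Type u} [CommSemigroupWithZero S] {x y : S}
    (hy : IsVertex S y) (hxy : x * y ≠ 0) : IsVertex S (x * y) := by
  obtain ⟨-, z, hz, hyz⟩ := hy
  exact ⟨hxy, z, hz, by rw [mul_assoc, hyz, CommSemigroupWithZero.mul_zero]⟩

theorem isZDGraphOf_of_unique {α : Type v} [Unique α] (G : SimpleGraph α) :
    IsZDGraphOf.{u} G := by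
  let := CommSemigroupWithZero.nullOption.{u}
  have : Unique {x : Option PUnit.{u + 1} // x ≠ 0 ∧ ∃ y, y ≠ 0 ∧ x * y = 0} :=
    { default := ⟨some PUnit.unit, by simp, some PUnit.unit, by simp, rfl⟩
      uniq := by rintro ⟨_ | _, h, -⟩ <;> [exact absurd rfl h; rfl] }
  refine ⟨_, CommSemigroupWithZero.nullOption, ⟨⟨Equiv.ofUnique _ _, ?_⟩⟩⟩
  exact iff_of_false (fun h => h.ne (Subsingleton.elim _ _))
    (fun h => h.ne (Subsingleton.elim _ _))

theorem isZDGraphOf_of_mul_mem_range {S : Type u} [CommSemigroupWithZero S] {α : Type v}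
    (G : SimpleGraph α) (σ : α → S) (hσ : Function.Injective σ) (hσ0 : ∀ a, σ a ≠ 0)
    (hadj : ∀ a b, G.Adj a b ↔ a ≠ b ∧ σ a * σ b = 0) (hnbr : ∀ a, ∃ b, G.Adj a b)
    (hmul : ∀ a b, σ a * σ b ≠ 0 → ∃ c, σ c = σ a * σ b) :
    IsZDGraphOf.{u} G := by
  let P : S → Prop := fun s => s = 0 ∨ ∃ a, σ a = s
  have hP : ∀ x y, P x → P y → P (x * y) := by
    rintro x y (rfl | ⟨a, rfl⟩) (rfl | ⟨b, rfl⟩)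
    · exact .inl (CommSemigroupWithZero.zero_mul' _)
    · exact .inl (CommSemigroupWithZero.zero_mul' _)
    · exact .inl (CommSemigroupWithZero.mul_zero _)
    · by_cases h : σ a * σ b = 0
      exacts [.inl h, .inr (hmul a b h)]
  let instP := CommSemigroupWithZero.subtype P (.inl rfl) hP
  let τ : α → {s // P s} := fun a => ⟨σ a, .inr ⟨a, rfl⟩⟩
  have hτ0 : ∀ a, τ a ≠ 0 := fun a h => hσ0 a (congrArg Subtype.val h)
  have hvert : ∀ a, IsVertex _ (τ a) := fun a =>
    let ⟨b, hab⟩ := hnbr a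
    ⟨hτ0 a, τ b, hτ0 b, Subtype.ext ((hadj a b).1 hab).2⟩
  let f : α → {x : {s // P s} // x ≠ 0 ∧ ∃ y, y ≠ 0 ∧ x * y = 0} := fun a => ⟨τ a, hvert a⟩
  have hf : Function.Bijective f := by
    refine ⟨fun a b h => hσ (congrArg (fun x => x.1.1) h), ?_⟩
    rintro ⟨⟨s, hs | ⟨a, rfl⟩⟩, hs0, -⟩
    · exact absurd (Subtype.ext hs) hs0
    · exact ⟨a, rfl⟩
  refine ⟨_, instP, ⟨(⟨Equiv.ofBijective f hf, ?_⟩ : G ≃g zdvGraph _).symm⟩⟩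
  intro a b
  rw [hadj]
  exact and_congr hf.1.ne_iff Subtype.ext_iff

theorem adj_iff_mul_symm_eq_zero {S : Type u} [CommSemigroupWithZero S] {γ : Type v}
    {K : SimpleGraph γ} (e : zdvGraph S ≃g K) {x y : γ} :
    K.Adj x y ↔ x ≠ y ∧ (e.symm x : S) * e.symm y = 0 := by
  rw [← e.symm.map_adj_iff]
  exact and_congr e.symm.injective.ne_iff Iff.rfl

section Attach

variable {S : Type u} [CommSemigroupWithZero S] {α : Type v} {β : Type w}
  {G : SimpleGraph α} {H : SimpleGraph β} {v : α} (e : zdvGraph S ≃g attachGraph G H v)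

theorem eq_of_adj_of_symm_inl_mul_eq_symm_inr {a u : α} {b : β} {x : S}
    (hx : (e.symm (.inl a) : S) * x = e.symm (.inr b)) (hau : G.Adj a u) : u = v := by
  have hua : (e.symm (.inl u) : S) * e.symm (.inl a) = 0 :=
    ((adj_iff_mul_symm_eq_zero e (x := .inl u) (y := .inl a)).1 (G.adj_symm hau)).2
  refine ((adj_iff_mul_symm_eq_zero e (x := .inl u) (y := .inr b)).2 ⟨Sum.inl_ne_inr, ?_⟩ :)
  rw [← hx, ← mul_assoc, hua, CommSemigroupWithZero.zero_mul']

theorem symm_inl_mul_ne_symm_inr (hnbr : ∀ a, ∃ u, G.Adj a u)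
    (hv : ∀ u, G.Adj v u → ¬ IsEndG G u) (a : α) (b : β) (x : S) :
    (e.symm (.inl a) : S) * x ≠ e.symm (.inr b) := by
  intro hx
  have hN : ∀ {u}, G.Adj a u → u = v := eq_of_adj_of_symm_inl_mul_eq_symm_inr e hx
  obtain ⟨u, hau⟩ := hnbr a
  obtain rfl := hN hau
  exact hv a (G.adj_symm hau) ⟨u, hau, fun w hw => hN hw⟩

theorem exists_symm_inl_eq_mul (hnbr : ∀ a, ∃ u, G.Adj a u)
    (hv : ∀ u, G.Adj v u → ¬ IsEndG G u) {a b : α}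
    (hab : (e.symm (.inl a) : S) * e.symm (.inl b) ≠ 0) :
    ∃ c, (e.symm (.inl c) : S) = e.symm (.inl a) * e.symm (.inl b) := by
  let p : {x : S // x ≠ 0 ∧ ∃ y, y ≠ 0 ∧ x * y = 0} :=
    ⟨_, IsVertex.mul_left (e.symm (.inl b)).2 hab⟩
  rcases hp : e p with c | c
  · exact ⟨c, by rw [← hp, e.symm_apply_apply]⟩
  · exact absurd (by rw [← hp, e.symm_apply_apply]) (symm_inl_mul_ne_symm_inr e hnbr hv a c _)

end Attach

theorem stmt3 {α : Type v} {β : Type w} (G : SimpleGraph α) (H : SimpleGraph β)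
    (hG : G.Connected)
    (v : α) (hv2 : ∀ u : α, G.Adj v u → ¬ IsEndG G u)
    (hF : ∃ (S : Type u) (inst : CommSemigroupWithZero S),
      Nonempty ((@zdvGraph S inst) ≃g attachGraph G H v)) :
    ∃ (S' : Type u) (inst : CommSemigroupWithZero S'),
      Nonempty ((@zdvGraph S' inst) ≃g G) := by
  obtain ⟨S, _, ⟨e⟩⟩ := hF
  rcases subsingleton_or_nontrivial α with _ | _
  · have := uniqueOfSubsingleton v
    exact isZDGraphOf_of_unique G
  · have hnbr := hG.preconnected.exists_adj_of_nontrivial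
    refine isZDGraphOf_of_mul_mem_range G (fun a => (e.symm (.inl a) : S))
      (fun a b h => Sum.inl_injective (e.symm.injective (Subtype.ext h)))
      (fun a => (e.symm (.inl a)).2.1) (fun a b => ?_) hnbr
      (fun a b => exists_symm_inl_eq_mul e hnbr hv2)
    exact (adj_iff_mul_symm_eq_zero e).trans (and_congr Sum.inl_injective.ne_iff Iff.rfl)
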